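/- arXiv:1312.5620 — 2 statements merged into one kernel-verified Lean document; each statement's English description precedes it below -/
import Mathlib

section
/- Let G ≠ C_{2k} be obtained from an even cycle C_{2k} with 2k ≥ 6 and 2k ≡ 2 (mod 3) by attaching pendant edges at cycle vertices. Then the strong chromatic index of G is at most 1 + max over edges uv of the cycle of (d(u) + d(v)). -/
open SimpleGraph

/-- Two edges of `G` are within distance at most 2: they share a vertex, or some edge of `G`
joins an endpoint of one to an endpoint of the other. -/
def EdgesNear {V : Type*} (G : SimpleGraph V) (e f : Sym2 V) : Prop :=
  (∃ x, x ∈ e ∧ x ∈ f) ∨ (∃ x y, x ∈ e ∧ y ∈ f ∧ G.Adj x y)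

/-- `c` assigns distinct colours to any two distinct edges of `G` at distance at most 2. -/
def IsStrongEdgeColoringOn {V : Type*} (G : SimpleGraph V) (c : Sym2 V → ℕ) : Prop :=
  ∀ e ∈ G.edgeSet, ∀ f ∈ G.edgeSet, e ≠ f → EdgesNear G e f → c e ≠ c f

/-- A strong edge-colouring of `G` with `k` colours. -/
def IsStrongEdgeColoring {V : Type*} (G : SimpleGraph V) (k : ℕ) (c : Sym2 V → ℕ) : Prop :=
  (∀ e ∈ G.edgeSet, c e < k) ∧ IsStrongEdgeColoringOn G c

/-- The strong chromatic index of `G`. -/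
noncomputable def sci {V : Type*} (G : SimpleGraph V) : ℕ :=
  sInf {k | ∃ c : Sym2 V → ℕ, IsStrongEdgeColoring G k c}

/-- Degree of a vertex (cardinality of its neighbour set). -/
noncomputable def sdeg {V : Type*} (G : SimpleGraph V) (v : V) : ℕ :=
  (G.neighborSet v).ncard

/-- The graph obtained from the cycle `C_n` (on vertices `Sum.inl i`, `i : Fin n`)
by attaching `p i` pendant edges at the cycle vertex `i` (the pendant neighbours of `i`
are the vertices `Sum.inr ⟨i, x⟩`). -/
def pufferGraph (n : ℕ) (p : Fin n → ℕ) :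
    SimpleGraph (Fin n ⊕ Σ i : Fin n, Fin (p i)) :=
  SimpleGraph.fromRel (fun a b =>
    (∃ i j : Fin n, a = Sum.inl i ∧ b = Sum.inl j ∧ (SimpleGraph.cycleGraph n).Adj i j) ∨
    (∃ (i : Fin n) (x : Fin (p i)), a = Sum.inl i ∧ b = Sum.inr ⟨i, x⟩))

open Classical in
/-- The maximum of `d(u) + d(v)` over the edges `uv` of the cycle of `pufferGraph n p`. -/
noncomputable def maxCycleDegSum (n : ℕ) (p : Fin n → ℕ) : ℕ :=
  Finset.univ.sup fun q : Fin n × Fin n =>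
    if (SimpleGraph.cycleGraph n).Adj q.1 q.2 then
      sdeg (pufferGraph n p) (Sum.inl q.1) + sdeg (pufferGraph n p) (Sum.inl q.2)
    else 0

/-!
Colour the cycle edge `i(i+1)` with `cyclePattern i`, the word `0123 0123` followed by blocks
`012`; because `n - 8 ≡ 0 (mod 3)` the word closes up, and any two cycle edges at most two
steps apart along the cycle get different colours, while cycle edges further apart are at
distance more than 2. Let `P = max_i (p i + p (i+1))`. Pendant edges at even cycle vertices get
the colours `4, 5, …` and those at odd vertices `4 + P, 4 + P - 1, …`. Two pendant edges at
distance at most 2 hang at the same or at adjacent cycle vertices, and adjacent vertices of an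
even cycle have opposite parity, so their ranges are disjoint. This uses `P + 5` colours, and
since `d(i) = 2 + p i`, `P + 5 = 1 + d(i) + d(i+1)` for a maximising `i`.
-/

lemma sci_le_of_isStrongEdgeColoring {V : Type*} {G : SimpleGraph V} {k : ℕ} {c : Sym2 V → ℕ}
    (h : IsStrongEdgeColoring G k c) : sci G ≤ k :=
  Nat.sInf_le ⟨c, h⟩

def cyclePattern (i : ℕ) : ℕ := if i < 8 then i % 4 else (i - 8) % 3

lemma cyclePattern_lt_four (i : ℕ) : cyclePattern i < 4 := by
  unfold cyclePattern; split_ifs <;> omega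

section CycleArithmetic

variable {n : ℕ} [NeZero n]

lemma cycleGraph_adj_iff_eq_add_one (hn : 2 ≤ n) {i j : Fin n} :
    (cycleGraph n).Adj i j ↔ j = i + 1 ∨ i = j + 1 := by
  obtain ⟨m, rfl⟩ : ∃ m, n = m + 2 := ⟨n - 2, by omega⟩
  rw [cycleGraph_adj, sub_eq_iff_eq_add, sub_eq_iff_eq_add, add_comm 1 j, add_comm 1 i, or_comm]

lemma Fin.ne_add_one_add_one (hn : 3 ≤ n) (i : Fin n) : i ≠ i + 1 + 1 := by
  obtain ⟨m, rfl⟩ : ∃ m, n = m + 3 := ⟨n - 3, by omega⟩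
  simp only [ne_eq, Fin.ext_iff, Fin.val_add_one, Fin.val_last]
  split_ifs <;> omega

lemma eq_add_one_or_add_two_of_ends_near (hn : 2 ≤ n) {i j u v : Fin n} (hij : i ≠ j)
    (hu : u = i ∨ u = i + 1) (hv : v = j ∨ v = j + 1) (huv : u = v ∨ (cycleGraph n).Adj u v) :
    j = i + 1 ∨ j = i + 1 + 1 ∨ i = j + 1 ∨ i = j + 1 + 1 := by
  rw [cycleGraph_adj_iff_eq_add_one hn] at huv
  rcases hu with rfl | rfl <;> rcases hv with rfl | rfl <;> grind

lemma cyclePattern_ne (h8 : 8 ≤ n) (h3 : n % 3 = 2) {i j : Fin n}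
    (hij : j = i + 1 ∨ j = i + 1 + 1) : cyclePattern j ≠ cyclePattern i := by
  obtain ⟨m, rfl⟩ : ∃ m, n = m + 1 := ⟨n - 1, by omega⟩
  rcases hij with rfl | rfl <;> simp only [Fin.val_add_one, Fin.ext_iff, Fin.val_last] <;>
    unfold cyclePattern <;> split_ifs <;> omega

end CycleArithmetic

section PufferGraph

variable {n : ℕ} {p : Fin n → ℕ}

@[simp]
lemma pufferGraph_adj_inl_inl {i j : Fin n} :
    (pufferGraph n p).Adj (.inl i) (.inl j) ↔ (cycleGraph n).Adj i j := by
  simp only [pufferGraph, exists_and_left, fromRel_adj, ne_eq, Sum.inl.injEq, exists_eq_left',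
    adj_comm, reduceCtorEq, exists_false, and_false, or_false, or_self, and_iff_right_iff_imp]
  exact fun h => h.ne

@[simp]
lemma pufferGraph_adj_inl_inr {i : Fin n} {s : Σ i : Fin n, Fin (p i)} :
    (pufferGraph n p).Adj (.inl i) (.inr s) ↔ s.1 = i := by
  obtain ⟨j, y⟩ := s
  simp only [pufferGraph, exists_and_left, fromRel_adj, ne_eq, reduceCtorEq, not_false_eq_true,
    Sum.inl.injEq, false_and, exists_false, and_false, Sum.inr.injEq, Sigma.mk.injEq,
    exists_eq_left', false_or, and_self, or_self, or_false, true_and, and_iff_left_iff_imp]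
  rintro rfl
  exact ⟨y, .rfl⟩

@[simp]
lemma pufferGraph_adj_inr_inl {i : Fin n} {s : Σ i : Fin n, Fin (p i)} :
    (pufferGraph n p).Adj (.inr s) (.inl i) ↔ s.1 = i := by
  rw [adj_comm, pufferGraph_adj_inl_inr]

@[simp]
lemma not_pufferGraph_adj_inr_inr {s t : Σ i : Fin n, Fin (p i)} :
    ¬ (pufferGraph n p).Adj (.inr s) (.inr t) := by
  simp [pufferGraph]

lemma pufferGraph_neighborSet_inl (i : Fin n) :
    (pufferGraph n p).neighborSet (.inl i) =
      Sum.inl '' (cycleGraph n).neighborSet i ∪ Set.range fun x : Fin (p i) => .inr ⟨i, x⟩ := by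
  ext (j | ⟨j, y⟩)
  · simp
  · simp only [mem_neighborSet, pufferGraph_adj_inl_inr, eq_comm, Set.mem_union, Set.mem_image,
      reduceCtorEq, and_false, exists_false, Set.mem_range, Sum.inr.injEq, Sigma.mk.injEq,
      exists_and_left, false_or, iff_self_and]
    rintro rfl
    exact ⟨y, .rfl⟩

lemma sdeg_pufferGraph_inl (hn : 3 ≤ n) (i : Fin n) :
    sdeg (pufferGraph n p) (.inl i) = 2 + p i := by
  have hdisj : Disjoint (Sum.inl '' (cycleGraph n).neighborSet i)
      (Set.range fun x : Fin (p i) => (.inr ⟨i, x⟩ : Fin n ⊕ Σ i : Fin n, Fin (p i))) := by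
    simp [Set.disjoint_left]
  have hinj : Function.Injective fun x : Fin (p i) =>
      (.inr ⟨i, x⟩ : Fin n ⊕ Σ i : Fin n, Fin (p i)) := by
    intro x y h
    simpa using h
  obtain ⟨m, rfl⟩ : ∃ m, n = m + 3 := ⟨n - 3, by omega⟩
  rw [sdeg, pufferGraph_neighborSet_inl, Set.ncard_union_eq hdisj,
    Set.ncard_image_of_injective _ Sum.inl_injective, Set.ncard_range_of_injective hinj,
    ← coe_neighborFinset, Set.ncard_coe_finset, card_neighborFinset_eq_degree,
    cycleGraph_degree_three_le, Nat.card_eq_fintype_card, Fintype.card_fin]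

lemma le_maxCycleDegSum {i j : Fin n} (h : (cycleGraph n).Adj i j) :
    sdeg (pufferGraph n p) (.inl i) + sdeg (pufferGraph n p) (.inl j) ≤ maxCycleDegSum n p := by
  rw [maxCycleDegSum]
  refine le_of_eq_of_le ?_ (Finset.le_sup (Finset.mem_univ (i, j)))
  simp [h]

lemma pufferGraph_edge_cases [NeZero n] (hn : 2 ≤ n)
    {e : Sym2 (Fin n ⊕ Σ i : Fin n, Fin (p i))} (he : e ∈ (pufferGraph n p).edgeSet) :
    (∃ i, e = s(.inl i, .inl (i + 1))) ∨ ∃ i x, e = s(.inl i, .inr ⟨i, x⟩) := by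
  induction e using Sym2.ind with | _ a b => ?_
  rw [mem_edgeSet] at he
  rcases a with i | ⟨i, x⟩ <;> rcases b with j | ⟨j, y⟩
  · rcases (cycleGraph_adj_iff_eq_add_one hn).mp (pufferGraph_adj_inl_inl.mp he) with rfl | rfl
    · exact .inl ⟨i, rfl⟩
    · exact .inl ⟨j, Sym2.eq_swap⟩
  · obtain rfl := pufferGraph_adj_inl_inr.mp he
    exact .inr ⟨j, y, rfl⟩
  · obtain rfl := pufferGraph_adj_inr_inl.mp he
    exact .inr ⟨i, x, Sym2.eq_swap⟩
  · exact absurd he not_pufferGraph_adj_inr_inr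

def pufferBase : Fin n ⊕ (Σ i : Fin n, Fin (p i)) → Fin n :=
  Sum.elim id Sigma.fst

lemma EdgesNear.exists_pufferBase {e f : Sym2 (Fin n ⊕ Σ i : Fin n, Fin (p i))}
    (h : EdgesNear (pufferGraph n p) e f) : ∃ u ∈ e, ∃ v ∈ f,
      pufferBase u = pufferBase v ∨ (cycleGraph n).Adj (pufferBase u) (pufferBase v) := by
  rcases h with ⟨u, hu, hv⟩ | ⟨u, v, hu, hv, huv⟩
  · exact ⟨u, hu, u, hv, .inl rfl⟩
  refine ⟨u, hu, v, hv, ?_⟩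
  rcases u with i | ⟨i, x⟩ <;> rcases v with j | ⟨j, y⟩
  · exact .inr (pufferGraph_adj_inl_inl.mp huv)
  · exact .inl (pufferGraph_adj_inl_inr.mp huv).symm
  · exact .inl (pufferGraph_adj_inr_inl.mp huv)
  · exact absurd huv not_pufferGraph_adj_inr_inr

end PufferGraph

def pendantColor {n : ℕ} (P : ℕ) (i : Fin n) (x : ℕ) : ℕ :=
  if i.val % 2 = 0 then 4 + x else 4 + P - x

lemma four_le_pendantColor {n : ℕ} {P x : ℕ} (i : Fin n) (hx : x ≤ P) :
    4 ≤ pendantColor P i x := by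
  unfold pendantColor; split_ifs <;> omega

lemma pendantColor_le {n : ℕ} {P x : ℕ} (i : Fin n) (hx : x ≤ P) :
    pendantColor P i x ≤ 4 + P := by
  unfold pendantColor; split_ifs <;> omega

lemma pendantColor_ne_of_ne {n : ℕ} {P x y : ℕ} (i : Fin n) (hx : x ≤ P) (hy : y ≤ P)
    (hxy : x ≠ y) : pendantColor P i x ≠ pendantColor P i y := by
  unfold pendantColor; split_ifs <;> omega

lemma pendantColor_ne_of_mod_two_ne {n : ℕ} {P x y : ℕ} {i j : Fin n}
    (hij : i.val % 2 ≠ j.val % 2) (hxy : x + y < P) :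
    pendantColor P i x ≠ pendantColor P j y := by
  unfold pendantColor; split_ifs <;> omega

section Coloring

variable {n : ℕ} [NeZero n] (p : Fin n → ℕ) (P : ℕ)

/-- The colour of the edge `ab` as read from `a`. It vanishes unless `a` is the cycle end of a
pendant edge or `(a, b) = (inl i, inl (i + 1))`, so summing both readings in `pufferColoring`
gives every edge its intended colour. -/
def pufferArcColor :
    Fin n ⊕ (Σ i : Fin n, Fin (p i)) → Fin n ⊕ (Σ i : Fin n, Fin (p i)) → ℕ
  | .inl i, .inl j => if j = i + 1 then cyclePattern i else 0
  | .inl _, .inr s => pendantColor P s.1 s.2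
  | .inr _, _ => 0

def pufferColoring : Sym2 (Fin n ⊕ Σ i : Fin n, Fin (p i)) → ℕ :=
  Sym2.lift ⟨fun a b => pufferArcColor p P a b + pufferArcColor p P b a,
    fun _ _ => add_comm _ _⟩

variable {p P}

lemma pufferColoring_cycle (hn : 3 ≤ n) (i : Fin n) :
    pufferColoring p P s(.inl i, .inl (i + 1)) = cyclePattern i := by
  simp [pufferColoring, pufferArcColor, Fin.ne_add_one_add_one hn]

lemma pufferColoring_pendant (i : Fin n) (x : Fin (p i)) :
    pufferColoring p P s(.inl i, .inr ⟨i, x⟩) = pendantColor P i x := by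
  simp [pufferColoring, pufferArcColor]

end Coloring

section StrongColoring

variable {n : ℕ} [NeZero n] {p : Fin n → ℕ} {P : ℕ}

lemma pufferColoring_lt_of_mem_edgeSet (hn : 3 ≤ n) (hP : ∀ i, p i ≤ P)
    {e : Sym2 (Fin n ⊕ Σ i : Fin n, Fin (p i))} (he : e ∈ (pufferGraph n p).edgeSet) :
    pufferColoring p P e < P + 5 := by
  rcases pufferGraph_edge_cases (by omega) he with ⟨i, rfl⟩ | ⟨i, x, rfl⟩
  · have := cyclePattern_lt_four i
    rw [pufferColoring_cycle hn]
    omega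
  · have := pendantColor_le i (x.isLt.le.trans (hP i))
    rw [pufferColoring_pendant]
    omega

lemma pufferColoring_cycle_lt_pendant (hn : 3 ≤ n) (hP : ∀ i, p i ≤ P)
    (i j : Fin n) (y : Fin (p j)) :
    pufferColoring p P s(.inl i, .inl (i + 1)) < pufferColoring p P s(.inl j, .inr ⟨j, y⟩) := by
  rw [pufferColoring_cycle hn, pufferColoring_pendant]
  exact (cyclePattern_lt_four i).trans_le (four_le_pendantColor j (y.isLt.le.trans (hP j)))

lemma pufferColoring_cycle_ne (h8 : 8 ≤ n) (h3 : n % 3 = 2) {i j : Fin n} (hij : i ≠ j)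
    (hnear : EdgesNear (pufferGraph n p) s(.inl i, .inl (i + 1)) s(.inl j, .inl (j + 1))) :
    pufferColoring p P s(.inl i, .inl (i + 1)) ≠ pufferColoring p P s(.inl j, .inl (j + 1)) := by
  have hbase : ∀ {k : Fin n} {u : Fin n ⊕ Σ i : Fin n, Fin (p i)},
      u ∈ s(.inl k, .inl (k + 1)) → pufferBase u = k ∨ pufferBase u = k + 1 := by
    intro k u hu
    rcases Sym2.mem_iff.mp hu with rfl | rfl
    exacts [.inl rfl, .inr rfl]
  obtain ⟨u, hu, v, hv, huv⟩ := hnear.exists_pufferBase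
  rw [pufferColoring_cycle (by omega), pufferColoring_cycle (by omega)]
  rcases eq_add_one_or_add_two_of_ends_near (by omega) hij (hbase hu) (hbase hv) huv
    with h | h | h | h
  · exact (cyclePattern_ne h8 h3 (.inl h)).symm
  · exact (cyclePattern_ne h8 h3 (.inr h)).symm
  · exact cyclePattern_ne h8 h3 (.inl h)
  · exact cyclePattern_ne h8 h3 (.inr h)

lemma pufferColoring_pendant_ne (hn : 2 ≤ n) (heven : Even n) (hP : ∀ i, p i + p (i + 1) ≤ P)
    {i j : Fin n} {x : Fin (p i)} {y : Fin (p j)}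
    (hne : (s(.inl i, .inr ⟨i, x⟩) : Sym2 (Fin n ⊕ Σ i : Fin n, Fin (p i))) ≠
      s(.inl j, .inr ⟨j, y⟩))
    (hnear : EdgesNear (pufferGraph n p) s(.inl i, .inr ⟨i, x⟩) s(.inl j, .inr ⟨j, y⟩)) :
    pufferColoring p P s(.inl i, .inr ⟨i, x⟩) ≠ pufferColoring p P s(.inl j, .inr ⟨j, y⟩) := by
  have hbase : ∀ {k : Fin n} {z : Fin (p k)} {u : Fin n ⊕ Σ i : Fin n, Fin (p i)},
      u ∈ s(.inl k, .inr ⟨k, z⟩) → pufferBase u = k := by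
    intro k z u hu
    rcases Sym2.mem_iff.mp hu with rfl | rfl <;> rfl
  obtain ⟨u, hu, v, hv, huv⟩ := hnear.exists_pufferBase
  rw [hbase hu, hbase hv] at huv
  rw [pufferColoring_pendant, pufferColoring_pendant]
  rcases huv with rfl | hadj
  · have hxy : x.val ≠ y.val := fun h => hne (by rw [Fin.val_injective h])
    have := hP i
    exact pendantColor_ne_of_ne i (by omega) (by omega) hxy
  · have hsum : p i + p j ≤ P := by
      rcases (cycleGraph_adj_iff_eq_add_one hn).mp hadj with rfl | rfl
      · exact hP i
      · rw [add_comm]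
        exact hP j
    have hpar : i.val % 2 ≠ j.val % 2 := by
      have : decide (i.val % 2 = 0) ≠ decide (j.val % 2 = 0) :=
        (cycleGraph.bicoloring_of_even n heven).valid hadj
      exact fun h => this (by rw [h])
    exact pendantColor_ne_of_mod_two_ne hpar (by omega)

theorem isStrongEdgeColoring_pufferColoring (h8 : 8 ≤ n) (h3 : n % 3 = 2) (heven : Even n)
    (hP : ∀ i, p i + p (i + 1) ≤ P) :
    IsStrongEdgeColoring (pufferGraph n p) (P + 5) (pufferColoring p P) := by
  have hpP : ∀ i, p i ≤ P := fun i => (Nat.le_add_right _ _).trans (hP i)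
  refine ⟨fun e he => pufferColoring_lt_of_mem_edgeSet (by omega) hpP he, ?_⟩
  intro e he f hf hne hnear
  rcases pufferGraph_edge_cases (by omega) he with ⟨i, rfl⟩ | ⟨i, x, rfl⟩ <;>
    rcases pufferGraph_edge_cases (by omega) hf with ⟨j, rfl⟩ | ⟨j, y, rfl⟩
  · exact pufferColoring_cycle_ne h8 h3 (fun h => hne (h ▸ rfl)) hnear
  · exact (pufferColoring_cycle_lt_pendant (by omega) hpP i j y).ne
  · exact (pufferColoring_cycle_lt_pendant (by omega) hpP j i x).ne'
  · exact pufferColoring_pendant_ne (by omega) heven hP hne hnear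

end StrongColoring

theorem sci_pufferGraph_le {n : ℕ} (p : Fin n → ℕ) (h8 : 8 ≤ n) (h3 : n % 3 = 2)
    (heven : Even n) : sci (pufferGraph n p) ≤ 1 + maxCycleDegSum n p := by
  have : NeZero n := ⟨by omega⟩
  obtain ⟨i, -, hi⟩ := Finset.univ.exists_max_image (fun i : Fin n => p i + p (i + 1))
    Finset.univ_nonempty
  have hadj : (cycleGraph n).Adj i (i + 1) :=
    (cycleGraph_adj_iff_eq_add_one (by omega)).mpr (.inl rfl)
  calc sci (pufferGraph n p) ≤ p i + p (i + 1) + 5 :=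
        sci_le_of_isStrongEdgeColoring <| isStrongEdgeColoring_pufferColoring h8 h3 heven
          fun j => hi j (Finset.mem_univ j)
    _ = 1 + (sdeg (pufferGraph n p) (.inl i) + sdeg (pufferGraph n p) (.inl (i + 1))) := by
        rw [sdeg_pufferGraph_inl (by omega), sdeg_pufferGraph_inl (by omega)]
        ring
    _ ≤ 1 + maxCycleDegSum n p := Nat.add_le_add_left (le_maxCycleDegSum hadj) 1

theorem sci_even_cycle_mod2_general (k : ℕ) (hk : 3 ≤ k) (hmod : (2 * k) % 3 = 2)
    (p : Fin (2 * k) → ℕ) :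
    sci (pufferGraph (2 * k) p) ≤ 1 + maxCycleDegSum (2 * k) p :=
  sci_pufferGraph_le p (by omega) hmod (even_two_mul k)

/-- Let `G ≠ C_{2k}` be obtained from an even cycle `C_{2k}`, `2k ≥ 6`, `2k ≡ 2 (mod 3)`, by
attaching pendant edges at cycle vertices. Then the strong chromatic index is at most
`1 + max_{uv ∈ E(C_{2k})} (d(u) + d(v))`. -/
theorem sci_even_cycle_mod2 (k : ℕ) (hk : 3 ≤ k) (hmod : (2 * k) % 3 = 2)
    (p : Fin (2 * k) → ℕ) (hp : ∃ i, 1 ≤ p i) :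
    sci (pufferGraph (2 * k) p) ≤ 1 + maxCycleDegSum (2 * k) p :=
  sci_even_cycle_mod2_general k hk hmod p
end

section
/- Let G be a tree. Then the strong chromatic index of G equals the maximum of d(u) + d(v) − 1 over edges uv of G. -/
/-!
In any graph the `d(u) + d(v) - 1` edges meeting an edge `uv` are pairwise at distance at most 2,
so they need distinct colours. Conversely, let `v, u, p, …` be a longest path in a forest. Then `v`
is a leaf, and by maximality and acyclicity so is every neighbour of `u` other than `p`; hence the
edges at distance at most 2 from `uv` all meet `u` or `p`, and there are at most `d(u) + d(p) - 2`
of them, fewer than the number of colours. So a strong colouring of the forest without `uv`,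
obtained by induction, extends to `uv`.
-/

open SimpleGraph

section

variable {V : Type*} {G H : SimpleGraph V}

lemma EdgesNear.symm {e f : Sym2 V} (h : EdgesNear G e f) : EdgesNear G f e := by
  rcases h with ⟨x, hxe, hxf⟩ | ⟨x, y, hxe, hyf, hxy⟩
  · exact Or.inl ⟨x, hxf, hxe⟩
  · exact Or.inr ⟨y, x, hyf, hxe, hxy.symm⟩

lemma edgesNear_of_mem_incidenceSet_union {u v : V} (huv : G.Adj u v) {e f : Sym2 V}
    (he : e ∈ G.incidenceSet u ∪ G.incidenceSet v)
    (hf : f ∈ G.incidenceSet u ∪ G.incidenceSet v) : EdgesNear G e f := by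
  rcases he with ⟨-, hue⟩ | ⟨-, hve⟩ <;> rcases hf with ⟨-, huf⟩ | ⟨-, hvf⟩
  · exact Or.inl ⟨u, hue, huf⟩
  · exact Or.inr ⟨u, v, hue, hvf, huv⟩
  · exact Or.inr ⟨v, u, hve, huf, huv.symm⟩
  · exact Or.inl ⟨v, hve, hvf⟩

lemma IsStrongEdgeColoring.ncard_le {k : ℕ} {c : Sym2 V → ℕ} (hc : IsStrongEdgeColoring G k c)
    {S : Set (Sym2 V)} (hS : S ⊆ G.edgeSet) (hnear : S.Pairwise (EdgesNear G)) :
    S.ncard ≤ k :=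
  calc S.ncard ≤ (Set.Iio k).ncard :=
        Set.ncard_le_ncard_of_injOn c (fun e he => hc.1 e (hS he))
          (fun e he f hf hcef => by_contra fun hef =>
            hc.2 e (hS he) f (hS hf) hef (hnear he hf hef) hcef)
          (Set.finite_Iio k)
    _ = k := Set.ncard_Iio_nat k

lemma ncard_incidenceSet (v : V) : (G.incidenceSet v).ncard = sdeg G v := by
  classical exact Nat.card_congr (G.incidenceSetEquivNeighborSet v)

lemma sdeg_pos_of_adj [Finite V] {u v : V} (h : G.Adj u v) : 0 < sdeg G u :=
  (Set.ncard_pos (Set.toFinite _)).mpr ⟨v, h⟩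

lemma sdeg_mono [Finite V] (h : G ≤ H) (v : V) : sdeg G v ≤ sdeg H v :=
  Set.ncard_le_ncard fun _ hw => h hw

lemma ncard_incidenceSet_union_of_adj [Finite V] {u v : V} (huv : G.Adj u v) :
    (G.incidenceSet u ∪ G.incidenceSet v).ncard = sdeg G u + sdeg G v - 1 := by
  have := Set.ncard_union_add_ncard_inter (G.incidenceSet u) (G.incidenceSet v)
  rw [G.incidenceSet_inter_incidenceSet_of_adj huv, Set.ncard_singleton, ncard_incidenceSet,
    ncard_incidenceSet] at this
  omega

lemma IsStrongEdgeColoring.sdeg_add_sdeg_sub_one_le [Finite V] {k : ℕ} {c : Sym2 V → ℕ}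
    (hc : IsStrongEdgeColoring G k c) {u v : V} (huv : G.Adj u v) :
    sdeg G u + sdeg G v - 1 ≤ k := by
  rw [← ncard_incidenceSet_union_of_adj huv]
  exact hc.ncard_le (Set.union_subset (G.incidenceSet_subset u) (G.incidenceSet_subset v))
    fun e he f hf _ => edgesNear_of_mem_incidenceSet_union huv he hf

lemma SimpleGraph.eq_of_mem_incidenceSet_of_neighborSet_eq {u v : V}
    (hv : G.neighborSet v = {u}) {f : Sym2 V} (hf : f ∈ G.incidenceSet v) : f = s(u, v) := by
  induction f using Sym2.ind with | _ x y =>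
  obtain ⟨hxy, hvf⟩ := hf
  have hN : ∀ w, G.Adj v w → w = u := fun w hw => by
    simpa [hv] using (show w ∈ G.neighborSet v from hw)
  rcases Sym2.mem_iff.mp hvf with rfl | rfl
  · rw [hN y hxy, Sym2.eq_swap]
  · rw [hN x hxy.symm]

lemma SimpleGraph.IsAcyclic.neighborSet_eq_singleton_snd_of_longest (hG : G.IsAcyclic) {a b : V}
    {P : G.Walk a b} (hP : P.IsPath) (hnil : ¬ P.Nil)
    (hmax : ∀ x y (Q : G.Walk x y), Q.IsPath → Q.length ≤ P.length) :
    G.neighborSet a = {P.snd} := by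
  ext x
  refine ⟨fun hx => ?_, fun hx => hx ▸ P.adj_snd hnil⟩
  by_contra hne
  have hxP : x ∉ P.support := fun hmem => hne (hG.eq_snd_of_adj_start hP hx hmem)
  have := hmax _ _ _ (hP.cons (h := hx.symm) hxP)
  simp at this

/-- Take `u` to be the second vertex of a longest path. -/
lemma SimpleGraph.IsAcyclic.exists_vertex_all_but_one_neighbor_leaf [Finite V]
    (hG : G.IsAcyclic) {a b : V} (hab : G.Adj a b) :
    ∃ u v p, G.Adj u v ∧ G.neighborSet v = {u} ∧ G.Adj u p ∧
      ∀ w, G.Adj u w → w ≠ p → G.neighborSet w = {u} := by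
  have : Nonempty V := ⟨a⟩
  obtain ⟨v, b, P, hP, hmax⟩ := Walk.exists_isPath_forall_isPath_length_le_length G
  have hnil : ¬ P.Nil := fun h => by
    simpa [Walk.length_eq_zero_iff.mpr h] using hmax _ _ _ (Walk.IsPath.of_adj hab)
  have huv := (P.adj_snd hnil).symm
  have hleaf : ∀ w, G.Adj P.snd w → w ≠ P.tail.snd → G.neighborSet w = {P.snd} := by
    intro w huw hwp
    have hwP : w ∉ P.tail.support := fun h => hwp (hG.eq_snd_of_adj_start hP.tail huw h)
    have hlen : (P.tail.cons huw.symm).length = P.length := by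
      rw [Walk.length_cons, Walk.length_tail_add_one hnil]
    have h := hG.neighborSet_eq_singleton_snd_of_longest (hP.tail.cons hwP) Walk.not_nil_cons
      (hlen ▸ hmax)
    rwa [Walk.snd_cons] at h
  have hv := hG.neighborSet_eq_singleton_snd_of_longest hP hnil hmax
  by_cases hp : G.Adj P.snd P.tail.snd
  · exact ⟨P.snd, v, P.tail.snd, huv, hv, hp, hleaf⟩
  · exact ⟨P.snd, v, v, huv, hv, huv, fun w huw _ => hleaf w huw fun h => hp (h ▸ huw)⟩

def nearEdges (G : SimpleGraph V) (e : Sym2 V) : Set (Sym2 V) :=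
  {f ∈ G.edgeSet | f ≠ e ∧ EdgesNear G e f}

lemma nearEdges_pendant_subset {u v p : V} (hv : G.neighborSet v = {u})
    (hleaf : ∀ w, G.Adj u w → w ≠ p → G.neighborSet w = {u}) :
    nearEdges G s(u, v) ⊆ (G.incidenceSet u \ {s(u, v)}) ∪ (G.incidenceSet p \ {s(u, p)}) := by
  rintro f ⟨hf, hfe, hnear⟩
  have hu : u ∈ f → f ∈ (G.incidenceSet u \ {s(u, v)}) ∪ (G.incidenceSet p \ {s(u, p)}) :=
    fun h => Or.inl ⟨⟨hf, h⟩, hfe⟩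
  have hvf : v ∉ f := fun h => hfe (eq_of_mem_incidenceSet_of_neighborSet_eq hv ⟨hf, h⟩)
  rcases hnear with ⟨x, hxe, hxf⟩ | ⟨x, y, hxe, hyf, hxy⟩
  · rcases Sym2.mem_iff.mp hxe with rfl | rfl
    · exact hu hxf
    · exact absurd hxf hvf
  · rcases Sym2.mem_iff.mp hxe with rfl | rfl
    · by_cases hyp : y = p
      · subst hyp
        by_cases hfxy : f = s(x, y)
        · exact hu (hfxy ▸ Sym2.mem_mk_left x y)
        · exact Or.inr ⟨⟨hf, hyf⟩, hfxy⟩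
      · apply hu
        rw [eq_of_mem_incidenceSet_of_neighborSet_eq (hleaf y hxy hyp) ⟨hf, hyf⟩]
        exact Sym2.mem_mk_left x y
    · have hyu : y = u := by simpa [hv] using (show y ∈ G.neighborSet x from hxy)
      exact hu (hyu ▸ hyf)

lemma ncard_nearEdges_add_two_le [Finite V] {u v p : V} (hv : G.neighborSet v = {u})
    (hup : G.Adj u p) (hleaf : ∀ w, G.Adj u w → w ≠ p → G.neighborSet w = {u}) :
    (nearEdges G s(u, v)).ncard + 2 ≤ sdeg G u + sdeg G p := by
  have huv : G.Adj u v := (hv ▸ Set.mem_singleton u : u ∈ G.neighborSet v).symm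
  calc (nearEdges G s(u, v)).ncard + 2
      ≤ ((G.incidenceSet u \ {s(u, v)}) ∪ (G.incidenceSet p \ {s(u, p)})).ncard + 2 :=
        Nat.add_le_add_right (Set.ncard_le_ncard (nearEdges_pendant_subset hv hleaf)) 2
    _ ≤ (G.incidenceSet u \ {s(u, v)}).ncard + (G.incidenceSet p \ {s(u, p)}).ncard + 2 :=
        Nat.add_le_add_right (Set.ncard_union_le _ _) 2
    _ = sdeg G u + sdeg G p := by
        rw [Set.ncard_sdiff_singleton_of_mem ((G.mem_incidenceSet u v).mpr huv),
          Set.ncard_sdiff_singleton_of_mem ((G.mk'_mem_incidenceSet_right_iff).mpr hup),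
          ncard_incidenceSet, ncard_incidenceSet]
        have := sdeg_pos_of_adj huv
        have := sdeg_pos_of_adj hup.symm
        omega

lemma EdgesNear.deleteEdges_pendant {f g : Sym2 V} (h : EdgesNear G f g) {u v : V}
    (hv : G.neighborSet v = {u}) (hf : f ∈ G.edgeSet) (hg : g ∈ G.edgeSet) (hfe : f ≠ s(u, v))
    (hge : g ≠ s(u, v)) : EdgesNear (G.deleteEdges {s(u, v)}) f g := by
  rcases h with hshare | ⟨x, y, hxf, hyg, hxy⟩
  · exact Or.inl hshare
  refine Or.inr ⟨x, y, hxf, hyg, deleteEdges_adj.mpr ⟨hxy, fun hxyuv => ?_⟩⟩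
  rcases Sym2.mem_iff.mp ((Set.mem_singleton_iff.mp hxyuv) ▸ Sym2.mem_mk_right u v) with rfl | rfl
  · exact hfe (eq_of_mem_incidenceSet_of_neighborSet_eq hv ⟨hf, hxf⟩)
  · exact hge (eq_of_mem_incidenceSet_of_neighborSet_eq hv ⟨hg, hyg⟩)

lemma IsStrongEdgeColoring.extend_pendant [DecidableEq V] {k m : ℕ}
    {c : Sym2 V → ℕ} {u v : V} (hv : G.neighborSet v = {u})
    (hc : IsStrongEdgeColoring (G.deleteEdges {s(u, v)}) k c) (hm : m < k)
    (hfresh : m ∉ c '' nearEdges G s(u, v)) :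
    IsStrongEdgeColoring G k (Function.update c s(u, v) m) := by
  have hG' : ∀ f ∈ G.edgeSet, f ≠ s(u, v) → f ∈ (G.deleteEdges {s(u, v)}).edgeSet :=
    fun f hf hfe => by rw [edgeSet_deleteEdges]; exact ⟨hf, hfe⟩
  refine ⟨fun f hf => ?_, fun f hf g hg hfg hnear => ?_⟩
  · by_cases hfe : f = s(u, v)
    · simpa [hfe] using hm
    · simpa [hfe] using hc.1 f (hG' f hf hfe)
  by_cases hfe : f = s(u, v) <;> by_cases hge : g = s(u, v)
  · exact absurd (hfe.trans hge.symm) hfg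
  · subst hfe
    simpa [hge] using fun h => hfresh ⟨g, ⟨hg, hge, hnear⟩, h.symm⟩
  · subst hge
    simpa [hfe] using fun h => hfresh ⟨f, ⟨hf, hfe, hnear.symm⟩, h⟩
  · simpa [hfe, hge] using hc.2 f (hG' f hf hfe) g (hG' g hg hge) hfg
      (hnear.deleteEdges_pendant hv hf hg hfe hge)

theorem SimpleGraph.IsAcyclic.exists_isStrongEdgeColoring [Finite V] (hG : G.IsAcyclic) {k : ℕ}
    (hk : ∀ a b, G.Adj a b → sdeg G a + sdeg G b - 1 ≤ k) :
    ∃ c, IsStrongEdgeColoring G k c := by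
  classical
  induction G using WellFoundedLT.induction with | _ G ih =>
  rcases eq_or_ne G ⊥ with rfl | hne
  · exact ⟨0, by simp [IsStrongEdgeColoring, IsStrongEdgeColoringOn]⟩
  obtain ⟨a, b, hab⟩ := ne_bot_iff_exists_adj.mp hne
  obtain ⟨u, v, p, huv, hv, hup, hleaf⟩ := hG.exists_vertex_all_but_one_neighbor_leaf hab
  have hlt : G.deleteEdges {s(u, v)} < G :=
    edgeSet_ssubset_edgeSet.mp (by simpa [edgeSet_deleteEdges] using huv)
  obtain ⟨c, hc⟩ := ih _ hlt (hG.anti (deleteEdges_le _)) fun x y hxy =>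
    le_trans (by gcongr <;> exact sdeg_mono (deleteEdges_le _) _) (hk x y hxy.1)
  have hN : (c '' nearEdges G s(u, v)).ncard < (Set.Iio k).ncard := by
    have := ncard_nearEdges_add_two_le hv hup hleaf
    have := hk u p hup
    rw [Set.ncard_Iio_nat]
    exact (Set.ncard_image_le (Set.toFinite _)).trans_lt (by omega)
  obtain ⟨m, hm, hmN⟩ := Set.exists_mem_notMem_of_ncard_lt_ncard hN
  exact ⟨_, hc.extend_pendant hv hm hmN⟩

end

open Classical in
/-- For a tree `G`, the strong chromatic index equals the maximum of `d(u) + d(v) - 1`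
over the edges `uv` of `G`. -/
theorem sci_tree {V : Type*} [Fintype V] (G : SimpleGraph V) (ht : G.IsTree) :
    sci G = Finset.univ.sup
      (fun q : V × V => if G.Adj q.1 q.2 then sdeg G q.1 + sdeg G q.2 - 1 else 0) := by
  set M := Finset.univ.sup
    (fun q : V × V => if G.Adj q.1 q.2 then sdeg G q.1 + sdeg G q.2 - 1 else 0)
  have hM : ∀ a b, G.Adj a b → sdeg G a + sdeg G b - 1 ≤ M := fun a b hab => by
    simpa [hab] using (Finset.le_sup (Finset.mem_univ (a, b)) : _ ≤ M)
  obtain ⟨c, hc⟩ := ht.isAcyclic.exists_isStrongEdgeColoring hM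
  refine le_antisymm (Nat.sInf_le ⟨c, hc⟩) (le_csInf ⟨M, c, hc⟩ ?_)
  rintro k ⟨c', hc'⟩
  refine Finset.sup_le fun q _ => ?_
  split_ifs with hq
  · exact hc'.sdeg_add_sdeg_sub_one_le hq
  · exact Nat.zero_le k
end
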